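/- Let n ≥ 2 and let H = (h_{ij}) be a real n×n unreduced lower Hessenberg matrix with associated polynomial sequence {q_i}_{0 ≤ i ≤ n}. Suppose all complex roots of q_n are simple (i.e. q_n, which has degree n, has n pairwise distinct roots in ℂ). Then the characteristic polynomial of H equals μ·q_n, where μ = ∏_{i=1}^{n−1} h_{i,i+1}; that is, det(x·I − H) = μ·q_n(x) as polynomials in x. -/

import Mathlib

/-- The superdiagonal entry `h_{i+1, i+2}` (1-based) of `H`, with the convention
`h_{n, n+1} = 1`.  Here `i` is 0-based. -/
def superEntry {n : ℕ} (H : Matrix (Fin n) (Fin n) ℝ) (i : ℕ) : ℝ :=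
  if h : i + 1 < n then H ⟨i, by omega⟩ ⟨i + 1, h⟩ else 1

/-- The entry `h_{i+1, j+1}` (1-based) of `H`, with `0` outside the matrix.
Here `i, j` are 0-based. -/
def lowEntry {n : ℕ} (H : Matrix (Fin n) (Fin n) ℝ) (i j : ℕ) : ℝ :=
  if h : i < n ∧ j < n then H ⟨i, h.1⟩ ⟨j, h.2⟩ else 0

/-- `H` is an unreduced lower Hessenberg matrix: `h_{ij} = 0` for `j > i + 1`
(1-based), and all superdiagonal entries `h_{i,i+1}` are nonzero. -/
def IsUnreducedLowerHessenberg {n : ℕ} (H : Matrix (Fin n) (Fin n) ℝ) : Prop :=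
  (∀ i j : Fin n, (i : ℕ) + 1 < (j : ℕ) → H i j = 0) ∧
  (∀ i : ℕ, ∀ h : i + 1 < n, H ⟨i, by omega⟩ ⟨i + 1, h⟩ ≠ 0)

/-- The associated polynomial sequence of a matrix `H` (intended: unreduced lower
Hessenberg): `q 0 = 1` and
`q (i+1) = (1 / h_{i+1,i+2}) * (X * q i − ∑_{j=0}^{i} h_{i+1,j+1} * q j)`
(1-based entries), with the convention `h_{n,n+1} = 1`. -/
noncomputable def assocPoly {n : ℕ} (H : Matrix (Fin n) (Fin n) ℝ) : ℕ → Polynomial ℝ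
  | 0 => 1
  | i + 1 =>
      Polynomial.C (superEntry H i)⁻¹ *
        (Polynomial.X * assocPoly H i -
          ∑ j : Fin (i + 1), Polynomial.C (lowEntry H i j) * assocPoly H j)

/-!
The vector `q = (q_0, …, q_{n-1})` satisfies `(X • 1 - H) q = q_n • e_n`: row `i < n` is the
recurrence defining `q_{i+1}`, and in the last row the convention `h_{n,n+1} = 1` leaves exactly
`q_n`. Multiplying by the adjugate gives `det (X • 1 - H) * q_0 = adj_{1n} * q_n`, and the `(1, n)`
cofactor is the determinant of a lower triangular minor with diagonal `-h_{i,i+1}`, i.e. `μ`.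
-/

open Polynomial Matrix Finset

namespace Matrix

def IsLowerHessenberg {R : Type*} [Zero R] {n : ℕ} (M : Matrix (Fin n) (Fin n) R) : Prop :=
  ∀ i j : Fin n, (i : ℕ) + 1 < j → M i j = 0

theorem IsLowerHessenberg.charmatrix {R : Type*} [CommRing R] {n : ℕ}
    {M : Matrix (Fin n) (Fin n) R} (hM : M.IsLowerHessenberg) : M.charmatrix.IsLowerHessenberg :=
  fun i j hij => by
    rw [charmatrix_apply_ne _ _ _ (by omega), hM i j hij, map_zero, neg_zero]

theorem IsLowerHessenberg.det_submatrix_castSucc_succ {R : Type*} [CommRing R] {m : ℕ}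
    {M : Matrix (Fin (m + 1)) (Fin (m + 1)) R} (hM : M.IsLowerHessenberg) :
    (M.submatrix Fin.castSucc Fin.succ).det = ∏ i : Fin m, M i.castSucc i.succ := by
  refine det_of_isLowerTriangular _ fun i j (hij : i < j) => hM _ _ ?_
  simp only [Fin.val_castSucc, Fin.val_succ]
  omega

theorem charmatrix_mulVec_apply {R ι : Type*} [CommRing R] [Fintype ι] [DecidableEq ι]
    (M : Matrix ι ι R) (v : ι → R[X]) (i : ι) :
    (charmatrix M *ᵥ v) i = X * v i - ∑ j, C (M i j) * v j := by
  simp [charmatrix_apply, mulVec, dotProduct, sub_mul, diagonal_apply]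

theorem det_mul_eq_adjugate_mul_of_mulVec_eq_single {R ι : Type*} [CommRing R]
    [Fintype ι] [DecidableEq ι] {A : Matrix ι ι R} {v : ι → R} {k : ι} {c : R}
    (h : A *ᵥ v = Pi.single k c) (i : ι) : A.det * v i = adjugate A i k * c := by
  simpa [mulVec_mulVec, adjugate_mul, smul_mulVec, mulVec_single] using
    congrFun (congrArg (adjugate A *ᵥ ·) h) i

end Matrix

section Hessenberg

variable {n : ℕ} {H : Matrix (Fin n) (Fin n) ℝ}

theorem IsUnreducedLowerHessenberg.isLowerHessenberg (hH : IsUnreducedLowerHessenberg H) :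
    H.IsLowerHessenberg :=
  hH.1

theorem IsUnreducedLowerHessenberg.superEntry_ne_zero (hH : IsUnreducedLowerHessenberg H)
    (i : ℕ) : superEntry H i ≠ 0 := by
  unfold superEntry
  split_ifs with h
  · exact hH.2 i h
  · exact one_ne_zero

theorem IsUnreducedLowerHessenberg.C_superEntry_mul_assocPoly_succ
    (hH : IsUnreducedLowerHessenberg H) (i : ℕ) :
    C (superEntry H i) * assocPoly H (i + 1) =
      X * assocPoly H i - ∑ j : Fin (i + 1), C (lowEntry H i j) * assocPoly H j := by
  rw [assocPoly, ← mul_assoc, ← C_mul, mul_inv_cancel₀ (hH.superEntry_ne_zero i), C_1, one_mul]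

theorem Matrix.IsLowerHessenberg.lowEntry_eq_zero (hH : H.IsLowerHessenberg) {i j : ℕ}
    (hij : i + 1 < j) : lowEntry H i j = 0 := by
  unfold lowEntry
  split_ifs with h
  · exact hH ⟨i, h.1⟩ ⟨j, h.2⟩ hij
  · rfl

theorem superEntry_sub_lowEntry_succ {i : ℕ} (hi : i < n) :
    superEntry H i - lowEntry H i (i + 1) = if i + 1 = n then 1 else 0 := by
  unfold superEntry lowEntry
  by_cases h : i + 1 < n
  · simp [h, hi, h.ne]
  · simp [show i + 1 = n by omega]

theorem Matrix.IsLowerHessenberg.sum_row_mul (hH : H.IsLowerHessenberg) (q : ℕ → ℝ[X])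
    (i : Fin n) :
    ∑ j, C (H i j) * q j = ∑ j ∈ range ((i : ℕ) + 2), C (lowEntry H i j) * q j := by
  have hrow : ∀ j : Fin n, H i j = lowEntry H i j := fun j => by
    simp [lowEntry, i.isLt, j.isLt]
  have hout : ∀ j : ℕ, n ≤ j → C (lowEntry H i j) * q j = 0 := fun j hj => by
    simp [lowEntry, show ¬j < n by omega]
  have hfar : ∀ j : ℕ, (i : ℕ) + 2 ≤ j → C (lowEntry H i j) * q j = 0 := fun j hj => by
    simp [hH.lowEntry_eq_zero (show (i : ℕ) + 1 < j by omega)]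
  simp_rw [hrow, Fin.sum_univ_eq_sum_range (fun j => C (lowEntry H i j) * q j)]
  rw [← eventually_constant_sum hout (Nat.le_add_right n (i + 2)),
    eventually_constant_sum hfar (Nat.le_add_left _ _)]

theorem IsUnreducedLowerHessenberg.charmatrix_mulVec_assocPoly_apply
    (hH : IsUnreducedLowerHessenberg H) (i : Fin n) :
    (charmatrix H *ᵥ fun j => assocPoly H j) i =
      if (i : ℕ) + 1 = n then assocPoly H n else 0 := by
  rw [charmatrix_mulVec_apply, hH.isLowerHessenberg.sum_row_mul, sum_range_succ,
    ← Fin.sum_univ_eq_sum_range (fun j => C (lowEntry H i j) * assocPoly H j), ← sub_sub,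
    ← hH.C_superEntry_mul_assocPoly_succ, ← sub_mul, ← C_sub, superEntry_sub_lowEntry_succ i.isLt]
  split_ifs with h
  · rw [C_1, one_mul, h]
  · rw [C_0, zero_mul]

end Hessenberg

theorem Matrix.IsLowerHessenberg.adjugate_charmatrix_zero_last {m : ℕ}
    {H : Matrix (Fin (m + 1)) (Fin (m + 1)) ℝ} (hH : H.IsLowerHessenberg) :
    adjugate H.charmatrix 0 (Fin.last m) = C (∏ i ∈ range m, superEntry H i) := by
  have hsuper : ∀ i : Fin m, H.charmatrix i.castSucc i.succ = -C (superEntry H i) := fun i => by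
    rw [charmatrix_apply_ne _ _ _ Fin.castSucc_lt_succ.ne, superEntry, dif_pos (by omega)]
    rfl
  rw [adjugate_fin_succ_eq_det_submatrix, Fin.succAbove_last, Fin.succAbove_zero,
    hH.charmatrix.det_submatrix_castSucc_succ]
  simp_rw [hsuper, prod_neg, card_univ, Fintype.card_fin, ← map_prod,
    Fin.prod_univ_eq_prod_range (superEntry H) m, Fin.val_last, Fin.val_zero, add_zero,
    ← mul_assoc, ← pow_add, Even.neg_one_pow ⟨m, rfl⟩, one_mul]

theorem charpoly_eq_mul_assocPoly_general (n : ℕ)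
    (H : Matrix (Fin n) (Fin n) ℝ) (hH : IsUnreducedLowerHessenberg H) :
    H.charpoly =
      Polynomial.C (∏ i ∈ Finset.range (n - 1), superEntry H i) * assocPoly H n := by
  cases n with
  | zero => simp [charpoly_isEmpty, assocPoly]
  | succ m =>
    have hq : (charmatrix H *ᵥ fun j => assocPoly H j) =
        Pi.single (Fin.last m) (assocPoly H (m + 1)) := by
      ext1 i
      simp [hH.charmatrix_mulVec_assocPoly_apply, Pi.single_apply, Fin.ext_iff]
    have hdet := det_mul_eq_adjugate_mul_of_mulVec_eq_single hq 0
    rw [hH.isLowerHessenberg.adjugate_charmatrix_zero_last] at hdet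
    simpa [charpoly, assocPoly] using hdet

/-- **Characteristic polynomial via the associated polynomial sequence.**
Let `H` be a real `n × n` unreduced lower Hessenberg matrix whose last associated
polynomial `q_n` has `n` pairwise distinct complex roots (all roots simple).
Then `det(x·I − H) = μ·q_n(x)` with `μ = ∏_{i=1}^{n−1} h_{i,i+1}`. -/
theorem charpoly_eq_mul_assocPoly (n : ℕ) (hn : 2 ≤ n)
    (H : Matrix (Fin n) (Fin n) ℝ) (hH : IsUnreducedLowerHessenberg H)
    (hsimple :
      Multiset.card (((assocPoly H n).map (algebraMap ℝ ℂ)).roots) = n ∧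
      (((assocPoly H n).map (algebraMap ℝ ℂ)).roots).Nodup) :
    H.charpoly =
      Polynomial.C (∏ i ∈ Finset.range (n - 1), superEntry H i) * assocPoly H n :=
  charpoly_eq_mul_assocPoly_general n H hH
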